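/- arXiv:2510.13168 — 2 statements merged into one kernel-verified Lean document; each statement's English description precedes it below -/
import Mathlib

section
/- Let V ⊆ ℝ³ and suppose there is a family of planar sets X(z) ⊆ ℝ² such that (1) for every z, the slice C(z) = {(x,y) : (x,y,z) ∈ V} equals X(z) ⊕ B_r, and (2) for all z₁ < z₂, C(z₁) ⊆ C(z₂). Then, setting X = {(x,y,z) : (x,y) ∈ X(z)}, one has V = X ⊕ Cyl_r where Cyl_r = B_r × [0,∞). -/
/-- Minkowski sum of subsets of ℝ². -/
def mink2 (A B : Set (ℝ × ℝ)) : Set (ℝ × ℝ) :=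
  {p | ∃ a ∈ A, ∃ b ∈ B, p = a + b}

/-- Minkowski sum of subsets of ℝ³. -/
def mink3 (A B : Set (ℝ × ℝ × ℝ)) : Set (ℝ × ℝ × ℝ) :=
  {p | ∃ a ∈ A, ∃ b ∈ B, p = a + b}

/-- Closed disk of radius `r` centered at the origin in ℝ². -/
def disk (r : ℝ) : Set (ℝ × ℝ) :=
  {q | q.1 ^ 2 + q.2 ^ 2 ≤ r ^ 2}

/-- Semi-infinite vertical cylinder `B_r × [0, ∞)`. -/
def cyl (r : ℝ) : Set (ℝ × ℝ × ℝ) :=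
  {p | (p.1, p.2.1) ∈ disk r ∧ 0 ≤ p.2.2}

/-- Horizontal zslice of `V ⊆ ℝ³` at height `z`. -/
def zslice (V : Set (ℝ × ℝ × ℝ)) (z : ℝ) : Set (ℝ × ℝ) :=
  {q | (q.1, q.2, z) ∈ V}

theorem mink_of_slicewise (V : Set (ℝ × ℝ × ℝ)) (Xf : ℝ → Set (ℝ × ℝ)) (r : ℝ)
    (hslice : ∀ z : ℝ, zslice V z = mink2 (Xf z) (disk r))
    (hnest : ∀ z₁ z₂ : ℝ, z₁ < z₂ → zslice V z₁ ⊆ zslice V z₂)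
    (hmono : ∀ z₁ z₂ : ℝ, z₁ ≤ z₂ → Xf z₁ ⊆ Xf z₂) :
    V = mink3 {p : ℝ × ℝ × ℝ | (p.1, p.2.1) ∈ Xf p.2.2} (cyl r) := by
  ext p
  obtain ⟨x, y, z⟩ := p
  constructor
  · intro hp
    have h : (x, y) ∈ mink2 (Xf z) (disk r) := by
      rw [← hslice]; exact hp
    obtain ⟨a, ha, b, hb, hab⟩ := h
    refine ⟨(a.1, a.2, z), ?_, (b.1, b.2, 0), ⟨hb, le_refl 0⟩, ?_⟩
    · simpa using ha
    · have h1 : x = a.1 + b.1 := congrArg Prod.fst hab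
      have h2 : y = a.2 + b.2 := congrArg Prod.snd hab
      simp [Prod.ext_iff, h1, h2]
  · rintro ⟨a, ha, b, ⟨hbd, hbz⟩, hab⟩
    obtain ⟨rfl, rfl, rfl⟩ : x = a.1 + b.1 ∧ y = a.2.1 + b.2.1 ∧ z = a.2.2 + b.2.2 := by
      simpa [Prod.ext_iff] using hab
    have ha' : (a.1, a.2.1) ∈ Xf (a.2.2 + b.2.2) :=
      hmono a.2.2 (a.2.2 + b.2.2) (le_add_of_nonneg_right hbz) ha
    have : (a.1 + b.1, a.2.1 + b.2.1) ∈ mink2 (Xf (a.2.2 + b.2.2)) (disk r) :=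
      ⟨(a.1, a.2.1), ha', (b.1, b.2.1), hbd, rfl⟩
    rw [← hslice] at this
    exact this
end

section
/- A set V ⊆ ℝ³ equals X ⊕ Cyl_r for some X ⊆ ℝ³ if and only if there exists a monotone family X(z) ⊆ ℝ² (X(z₁) ⊆ X(z₂) for z₁ ≤ z₂) such that for every z the slice C(z) = {(x,y) : (x,y,z) ∈ V} equals X(z) ⊕ B_r. -/
theorem mink_cyl_iff_monotone_slices (V : Set (ℝ × ℝ × ℝ)) (r : ℝ) :
    (∃ X : Set (ℝ × ℝ × ℝ), V = mink3 X (cyl r)) ↔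
      ∃ Xf : ℝ → Set (ℝ × ℝ),
        (∀ z₁ z₂ : ℝ, z₁ ≤ z₂ → Xf z₁ ⊆ Xf z₂) ∧
        (∀ z : ℝ, zslice V z = mink2 (Xf z) (disk r)) := by
  constructor
  · rintro ⟨X, rfl⟩
    refine ⟨fun z => {q | ∃ w ≤ z, (q.1, q.2, w) ∈ X}, ?_, ?_⟩
    · rintro z₁ z₂ h q ⟨w, hw, hq⟩
      exact ⟨w, hw.trans h, hq⟩
    · intro z
      ext q
      constructor
      · rintro ⟨a, ha, b, ⟨hb1, hb2⟩, hab⟩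
        have h1 : q.1 = a.1 + b.1 := congrArg Prod.fst hab
        have h2 : q.2 = a.2.1 + b.2.1 := congrArg (fun p => p.2.1) hab
        have h3 : z = a.2.2 + b.2.2 := congrArg (fun p => p.2.2) hab
        refine ⟨(a.1, a.2.1), ⟨a.2.2, by linarith, ha⟩, (b.1, b.2.1), hb1, ?_⟩
        exact Prod.ext h1 h2
      · rintro ⟨a, ⟨w, hw, ha⟩, b, hb, hab⟩
        refine ⟨(a.1, a.2, w), ha, (b.1, b.2, z - w), ⟨hb, by simp only [Prod.mk.injEq]; linarith⟩, ?_⟩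
        have h1 : q.1 = a.1 + b.1 := congrArg Prod.fst hab
        have h2 : q.2 = a.2 + b.2 := congrArg Prod.snd hab
        refine Prod.ext h1 (Prod.ext h2 (by simp [Prod.snd_add]))
  · rintro ⟨Xf, hmono, hslice⟩
    refine ⟨{p | (p.1, p.2.1) ∈ Xf p.2.2}, ?_⟩
    ext p
    have hp : p ∈ V ↔ (p.1, p.2.1) ∈ zslice V p.2.2 := by simp [zslice]
    rw [hp, hslice]
    constructor
    · rintro ⟨a, ha, b, hb, hab⟩
      have h1 : p.1 = a.1 + b.1 := congrArg Prod.fst hab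
      have h2 : p.2.1 = a.2 + b.2 := congrArg Prod.snd hab
      exact ⟨(a.1, a.2, p.2.2), ha, (b.1, b.2, 0), ⟨hb, le_refl 0⟩,
        Prod.ext h1 (Prod.ext h2 (by simp [Prod.snd_add]))⟩
    · rintro ⟨a, ha, b, ⟨hb1, hb2⟩, hab⟩
      have h1 : p.1 = a.1 + b.1 := congrArg Prod.fst hab
      have h2 : p.2.1 = a.2.1 + b.2.1 := congrArg (fun p => p.2.1) hab
      have h3 : p.2.2 = a.2.2 + b.2.2 := congrArg (fun p => p.2.2) hab
      have ha' : (a.1, a.2.1) ∈ Xf p.2.2 := hmono _ _ (by linarith) ha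
      exact ⟨(a.1, a.2.1), ha', (b.1, b.2.1), hb1, Prod.ext h1 h2⟩
end
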